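/- Excess is monotone: if P ⊆ Q are finite subsets of G, then e(P) ≤ e(Q). -/

import Mathlib

open scoped symmDiff

/-- The left translate `gS` of a finite shape `S` in a group `G`. -/
def gset {G : Type*} [Group G] (g : G) (S : Finset G) : Set G :=
  (fun s => g * s) '' (S : Set G)

/-- A `(C,S)`-filling move: `P ⊊ Q`, some translate `gS` meets `P` in exactly
`|S| - 1` elements, and `Q = P ∪ gC`. -/
def FillMove {G : Type*} [Group G] (C S : Finset G) (P Q : Set G) : Prop :=
  P ⊂ Q ∧ ∃ g : G, (P ∩ gset g S).ncard = S.card - 1 ∧ Q = P ∪ gset g C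

/-- The `(C,S)`-filling closure: the union of all sets reachable from `P` by
finitely many filling moves. -/
def fillClosure {G : Type*} [Group G] (C S : Finset G) (P : Set G) : Set G :=
  {x | ∃ Q : Set G, Relation.ReflTransGen (FillMove C S) P Q ∧ x ∈ Q}


/-- The rank of a finite pattern: the least cardinality of a finite set with the
same filling closure. -/
noncomputable def rank {G : Type*} [Group G] (C S : Finset G) (P : Finset G) : ℕ :=
  sInf {n : ℕ | ∃ R : Finset G, R.card = n ∧
    fillClosure C S (R : Set G) = fillClosure C S (P : Set G)}

/-- The excess of a finite pattern. -/
noncomputable def excess {G : Type*} [Group G] (C S : Finset G) (P : Finset G) : ℕ :=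
  P.card - rank C S P

/-!
A filling move that is available from `P` stays available from any `P' ⊇ P` unless it has
become trivial: if `gS` met `P` in `|S| - 1` points, it meets `P'` in `|S| - 1` or `|S|` points,
and in the latter case `gC ⊆ gS ⊆ P'` because `C ⊆ S`. Hence the closure is monotone, and a
finite set lying in the closure of `B` has its closure inside that of `B`. If `R` realises the
rank of `P ⊆ Q`, then `R ∪ (Q \ P)` has the same closure as `Q`, so
`rank Q ≤ rank P + |Q| - |P|`, which is the monotonicity of the excess.
-/

section FillClosure

variable {G : Type*} [Group G] {C S : Finset G}

lemma ncard_gset (g : G) (S : Finset G) : (gset g S).ncard = S.card := by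
  rw [gset, Set.ncard_image_of_injective _ (mul_right_injective g), Set.ncard_coe_finset]

lemma ncard_inter_gset_eq_of_subset (hCS : C ⊆ S) {P P' : Set G} {g : G} (hPP' : P ⊆ P')
    (hP : (P ∩ gset g S).ncard = S.card - 1) (hC : ¬ gset g C ⊆ P') :
    (P' ∩ gset g S).ncard = S.card - 1 := by
  have hfin : (gset g S).Finite := S.finite_toSet.image _
  have hge : S.card - 1 ≤ (P' ∩ gset g S).ncard :=
    hP ▸ Set.ncard_le_ncard (Set.inter_subset_inter_left _ hPP') (hfin.subset Set.inter_subset_right)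
  have hle : (P' ∩ gset g S).ncard ≤ S.card :=
    ncard_gset g S ▸ Set.ncard_le_ncard Set.inter_subset_right hfin
  have hne : (P' ∩ gset g S).ncard ≠ S.card := by
    intro hfull
    have hgS : P' ∩ gset g S = gset g S :=
      Set.eq_of_subset_of_ncard_le Set.inter_subset_right (by rw [hfull, ncard_gset]) hfin
    have hgC : gset g C ⊆ gset g S := Set.image_mono (Finset.coe_subset.mpr hCS)
    exact hC (hgC.trans (hgS ▸ Set.inter_subset_left))
  omega

lemma FillMove.reflTransGen_union_of_subset (hCS : C ⊆ S) {P P' Q : Set G} (hPP' : P ⊆ P')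
    (h : FillMove C S P Q) : Relation.ReflTransGen (FillMove C S) P' (P' ∪ Q) := by
  obtain ⟨-, g, hP, rfl⟩ := h
  rw [← Set.union_assoc, Set.union_eq_self_of_subset_right hPP']
  by_cases hC : gset g C ⊆ P'
  · rw [Set.union_eq_self_of_subset_right hC]
  · exact .single ⟨Set.ssubset_union_left_iff.mpr hC, g,
      ncard_inter_gset_eq_of_subset hCS hPP' hP hC, rfl⟩

lemma subset_of_reflTransGen_fillMove {P Q : Set G}
    (h : Relation.ReflTransGen (FillMove C S) P Q) : P ⊆ Q := by
  induction h with
  | refl => exact subset_rfl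
  | tail _ hmove ih => exact ih.trans hmove.1.subset

lemma reflTransGen_fillMove_union_of_subset (hCS : C ⊆ S) {P P' Q : Set G} (hPP' : P ⊆ P')
    (h : Relation.ReflTransGen (FillMove C S) P Q) :
    Relation.ReflTransGen (FillMove C S) P' (P' ∪ Q) := by
  induction h with
  | refl => rw [Set.union_eq_self_of_subset_right hPP']
  | @tail Q₁ Q₂ _ hmove ih =>
    have hstep := hmove.reflTransGen_union_of_subset hCS (Set.subset_union_right (s := P'))
    rw [Set.union_assoc, Set.union_eq_self_of_subset_left hmove.1.subset] at hstep
    exact ih.trans hstep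

lemma reflTransGen_fillMove_union (hCS : C ⊆ S) {P Q₁ Q₂ : Set G}
    (h₁ : Relation.ReflTransGen (FillMove C S) P Q₁)
    (h₂ : Relation.ReflTransGen (FillMove C S) P Q₂) :
    Relation.ReflTransGen (FillMove C S) P (Q₁ ∪ Q₂) :=
  h₁.trans (reflTransGen_fillMove_union_of_subset hCS (subset_of_reflTransGen_fillMove h₁) h₂)

lemma subset_fillClosure (P : Set G) : P ⊆ fillClosure C S P :=
  fun _ hx => ⟨P, .refl, hx⟩

lemma fillClosure_mono (hCS : C ⊆ S) {P P' : Set G} (hPP' : P ⊆ P') :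
    fillClosure C S P ⊆ fillClosure C S P' := by
  rintro x ⟨Q, hPQ, hx⟩
  exact ⟨P' ∪ Q, reflTransGen_fillMove_union_of_subset hCS hPP' hPQ, Or.inr hx⟩

lemma fillClosure_subset_of_reflTransGen {P Q : Set G}
    (h : Relation.ReflTransGen (FillMove C S) P Q) : fillClosure C S Q ⊆ fillClosure C S P :=
  fun _ ⟨Q', hQQ', hx⟩ => ⟨Q', h.trans hQQ', hx⟩

lemma exists_reflTransGen_superset_of_subset_fillClosure (hCS : C ⊆ S) {B : Set G}
    (A : Finset G) (hA : (A : Set G) ⊆ fillClosure C S B) :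
    ∃ Q, Relation.ReflTransGen (FillMove C S) B Q ∧ (A : Set G) ⊆ Q := by
  classical
  induction A using Finset.induction with
  | empty => exact ⟨B, .refl, by simp⟩
  | @insert a A _ ih =>
    rw [Finset.coe_insert, Set.insert_subset_iff] at hA
    obtain ⟨Q₁, hBQ₁, hAQ₁⟩ := ih hA.2
    obtain ⟨Q₂, hBQ₂, haQ₂⟩ := hA.1
    refine ⟨Q₁ ∪ Q₂, reflTransGen_fillMove_union hCS hBQ₁ hBQ₂, ?_⟩
    rw [Finset.coe_insert]
    exact Set.insert_subset (Or.inr haQ₂) (hAQ₁.trans Set.subset_union_left)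

lemma fillClosure_subset_of_subset_fillClosure (hCS : C ⊆ S) {A : Finset G} {B : Set G}
    (hA : (A : Set G) ⊆ fillClosure C S B) : fillClosure C S A ⊆ fillClosure C S B := by
  obtain ⟨Q, hBQ, hAQ⟩ := exists_reflTransGen_superset_of_subset_fillClosure hCS A hA
  exact (fillClosure_mono hCS hAQ).trans (fillClosure_subset_of_reflTransGen hBQ)

lemma fillClosure_eq_of_subset_fillClosure (hCS : C ⊆ S) {A B : Finset G}
    (hA : (A : Set G) ⊆ fillClosure C S B) (hB : (B : Set G) ⊆ fillClosure C S A) :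
    fillClosure C S A = fillClosure C S B :=
  (fillClosure_subset_of_subset_fillClosure hCS hA).antisymm
    (fillClosure_subset_of_subset_fillClosure hCS hB)

end FillClosure

section Rank

variable {G : Type*} [Group G] {C S : Finset G}

lemma rank_le_card_of_fillClosure_eq {P R : Finset G}
    (h : fillClosure C S (R : Set G) = fillClosure C S (P : Set G)) : rank C S P ≤ R.card :=
  Nat.sInf_le ⟨R, rfl, h⟩

lemma rank_le_card_self (P : Finset G) : rank C S P ≤ P.card :=
  rank_le_card_of_fillClosure_eq rfl

lemma exists_card_eq_rank (P : Finset G) :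
    ∃ R : Finset G, R.card = rank C S P ∧
      fillClosure C S (R : Set G) = fillClosure C S (P : Set G) :=
  Nat.sInf_mem (s := {n | ∃ R : Finset G, R.card = n ∧
    fillClosure C S (R : Set G) = fillClosure C S (P : Set G)}) ⟨P.card, P, rfl, rfl⟩

lemma rank_add_card_le_rank_add_card (hCS : C ⊆ S) {P Q : Finset G} (hPQ : P ⊆ Q) :
    rank C S Q + P.card ≤ rank C S P + Q.card := by
  classical
  obtain ⟨R, hRcard, hRP⟩ := exists_card_eq_rank (C := C) (S := S) P
  have hRQ : fillClosure C S ↑(R ∪ (Q \ P)) = fillClosure C S (Q : Set G) := by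
    have hPR : fillClosure C S (P : Set G) ⊆ fillClosure C S ↑(R ∪ (Q \ P)) :=
      hRP ▸ fillClosure_mono hCS (by simp)
    refine fillClosure_eq_of_subset_fillClosure hCS ?_ ?_
    · rw [Finset.coe_union, Set.union_subset_iff]
      exact ⟨(hRP ▸ subset_fillClosure _).trans (fillClosure_mono hCS (by simpa using hPQ)),
        (by simp : ((Q \ P : Finset G) : Set G) ⊆ Q).trans (subset_fillClosure _)⟩
    · intro x hxQ
      by_cases hxP : x ∈ P
      · exact hPR (subset_fillClosure _ hxP)
      · exact subset_fillClosure _ (by simp [hxQ, hxP])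
  have hsdiff : (Q \ P).card + P.card = Q.card := Finset.card_sdiff_add_card_eq_card hPQ
  calc rank C S Q + P.card ≤ (R ∪ (Q \ P)).card + P.card := by
        gcongr; exact rank_le_card_of_fillClosure_eq hRQ
    _ ≤ R.card + (Q \ P).card + P.card := by gcongr; exact Finset.card_union_le _ _
    _ = rank C S P + Q.card := by rw [hRcard, add_assoc, hsdiff]

end Rank

theorem excess_monotone_general {G : Type*} [Group G] (C S : Finset G) (hCS : C ⊆ S)
    (P Q : Finset G) (hPQ : P ⊆ Q) :
    excess C S P ≤ excess C S Q := by
  have hrank := rank_add_card_le_rank_add_card hCS hPQ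
  have hrankP := rank_le_card_self (C := C) (S := S) P
  unfold excess
  omega

/-- Excess is monotone: if `P ⊆ Q` then `e(P) ≤ e(Q)`. -/
theorem excess_monotone {G : Type*} [Group G] (C S : Finset G) (hCS : C ⊆ S)
    (hfin : ∀ P : Finset G, (fillClosure C S (P : Set G)).Finite)
    (P Q : Finset G) (hPQ : P ⊆ Q) :
    excess C S P ≤ excess C S Q :=
  excess_monotone_general C S hCS P Q hPQ
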